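/- Under the PIGD setup, assume additionally that argmin F is nonempty, and let x̄^k denote the metric projection of x^k onto argmin F. Set δ_k := (1/γ_k − L/2)/2, ξ_k := F(x^k) + δ_k‖x^k − x^{k−1}‖² − min F, and ε_k := 4c δ_{k+1}²/((1−c)L) + 4c/((1−c)L γ_k²). Then for every k ≥ 0: (ξ_{k+1})² ≤ ε_k · (ξ_k − ξ_{k+1}) · (2‖x^{k+1} − x̄^{k+1}‖² + ‖x^{k+1} − x^k‖²). -/

import Mathlib

/-!
Write `r = 1/γₖ` and `yᵏ` for the point whose prox is `xᵏ⁺¹`; optimality of the prox step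
says `r (yᵏ - xᵏ⁺¹) ∈ ∂g(xᵏ⁺¹)`. Tested against `xᵏ` and combined with the descent lemma, it
gives the sufficient decrease
`ξₖ - ξₖ₊₁ ≥ m (‖xᵏ⁺¹ - xᵏ‖² + ‖xᵏ - xᵏ⁻¹‖²)` with `m = L(1-c)/(4c) = δₖ - βₖ r/2`.
Tested against `x̄ᵏ⁺¹`, together with the convexity of `f` and the nonexpansiveness of the gradient
step `x ↦ x - γₖ∇f(x)` (cocoercivity of `∇f`, valid as `γₖ L ≤ 2`), it bounds the optimality gap:
`ξₖ₊₁ ≤ r (‖xᵏ⁺¹ - xᵏ‖ + βₖ‖xᵏ - xᵏ⁻¹‖) ‖xᵏ⁺¹ - x̄ᵏ⁺¹‖ + δₖ₊₁‖xᵏ⁺¹ - xᵏ‖²`.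
Squaring this bound and applying Cauchy–Schwarz gives the claim, since `εₖ = (δₖ₊₁² + r²)/m`.
-/

open Set Filter Topology RealInnerProductSpace

lemma nonpos_of_forall_le_mul {a K : ℝ} (h : ∀ t ∈ Ioc (0 : ℝ) 1, a ≤ t * K) : a ≤ 0 := by
  have hlim : Tendsto (fun t : ℝ => t * K) (𝓝[>] 0) (𝓝 0) := by
    simpa using ((continuous_mul_const K).tendsto 0).mono_left nhdsWithin_le_nhds
  exact ge_of_tendsto hlim (eventually_of_mem (Ioc_mem_nhdsGT one_pos) h)

section FirstOrder

variable {E : Type*} [NormedAddCommGroup E] [InnerProductSpace ℝ E]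

theorem ConvexOn.add_inv_mul_inner_le_of_isMinOn {g : E → ℝ} (hg : ConvexOn ℝ univ g) {γ : ℝ}
    (hγ : 0 < γ) {y m : E} (hm : IsMinOn (fun z => ‖z - y‖ ^ 2 / (2 * γ) + g z) univ m) (z : E) :
    g m + γ⁻¹ * ⟪y - m, z - m⟫ ≤ g z := by
  suffices g m - g z + γ⁻¹ * ⟪y - m, z - m⟫ ≤ 0 by linear_combination this
  refine nonpos_of_forall_le_mul (K := ‖z - m‖ ^ 2 / (2 * γ)) fun t ⟨ht0, ht1⟩ => ?_
  have hmin : ‖m - y‖ ^ 2 / (2 * γ) + g m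
      ≤ ‖m + t • (z - m) - y‖ ^ 2 / (2 * γ) + g (m + t • (z - m)) := hm (mem_univ _)
  have hconv : g (m + t • (z - m)) ≤ (1 - t) * g m + t * g z := by
    have := hg.2 (mem_univ m) (mem_univ z) (sub_nonneg.2 ht1) ht0.le (sub_add_cancel 1 t)
    rwa [show (1 - t) • m + t • z = m + t • (z - m) by module, smul_eq_mul, smul_eq_mul] at this
  have hexpand : ‖m + t • (z - m) - y‖ ^ 2 / (2 * γ) = ‖m - y‖ ^ 2 / (2 * γ)
      - t * (γ⁻¹ * ⟪y - m, z - m⟫) + t * (t * (‖z - m‖ ^ 2 / (2 * γ))) := by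
    rw [show m + t • (z - m) - y = -(y - m) + t • (z - m) by abel, norm_add_sq_real, norm_neg,
      norm_sub_rev y, inner_neg_left, real_inner_smul_right, norm_smul, Real.norm_of_nonneg ht0.le]
    field_simp
    ring
  have : t * (g m - g z + γ⁻¹ * ⟪y - m, z - m⟫) ≤ t * (t * (‖z - m‖ ^ 2 / (2 * γ))) := by
    linarith
  exact le_of_mul_le_mul_left this ht0

variable [CompleteSpace E] {f : E → ℝ}

theorem HasGradientAt.hasDerivAt_comp_line {u w f' : E} {t : ℝ}
    (h : HasGradientAt f f' (u + t • w)) :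
    HasDerivAt (fun s : ℝ => f (u + s • w)) ⟪f', w⟫ t := by
  have hline : HasDerivAt (fun s : ℝ => u + s • w) w t := by
    simpa using ((hasDerivAt_id t).smul_const w).const_add u
  have := h.hasFDerivAt.comp_hasDerivAt t hline
  simp only [InnerProductSpace.toDual_apply_apply] at this
  exact this

variable {f' : E → E} (hf' : ∀ x, HasGradientAt f (f' x) x)
include hf'

theorem le_add_inner_add_sq_of_lipschitz_gradient {L : ℝ}
    (hlip : ∀ x y, ‖f' x - f' y‖ ≤ L * ‖x - y‖) (u v : E) :
    f v ≤ f u + ⟪f' u, v - u⟫ + L / 2 * ‖v - u‖ ^ 2 := by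
  set ψ : ℝ → ℝ :=
    fun t => f (u + t • (v - u)) - t * ⟪f' u, v - u⟫ - L / 2 * t ^ 2 * ‖v - u‖ ^ 2
  have hψ : ∀ t, HasDerivAt ψ
      (⟪f' (u + t • (v - u)), v - u⟫ - ⟪f' u, v - u⟫ - L / 2 * (2 * t) * ‖v - u‖ ^ 2) t :=
    fun t =>
    (((hf' _).hasDerivAt_comp_line).sub ((hasDerivAt_id t).mul_const _ |>.congr_deriv
      (one_mul _))).sub (((hasDerivAt_pow 2 t).const_mul _).mul_const _ |>.congr_deriv (by ring))
  have hanti : AntitoneOn ψ (Icc 0 1) := by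
    refine antitoneOn_of_hasDerivWithinAt_nonpos (convex_Icc 0 1)
      (fun t _ => (hψ t).continuousAt.continuousWithinAt) (fun t _ => (hψ t).hasDerivWithinAt)
      fun t ht => ?_
    rw [interior_Icc] at ht
    have : ⟪f' (u + t • (v - u)) - f' u, v - u⟫ ≤ L * t * ‖v - u‖ ^ 2 :=
      calc ⟪f' (u + t • (v - u)) - f' u, v - u⟫
          ≤ ‖f' (u + t • (v - u)) - f' u‖ * ‖v - u‖ := real_inner_le_norm _ _
        _ ≤ L * ‖t • (v - u)‖ * ‖v - u‖ := by
          gcongr; simpa using hlip (u + t • (v - u)) u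
        _ = L * t * ‖v - u‖ ^ 2 := by rw [norm_smul, Real.norm_of_nonneg ht.1.le]; ring
    rw [inner_sub_left] at this
    linarith
  have := hanti (left_mem_Icc.2 zero_le_one) (right_mem_Icc.2 zero_le_one) zero_le_one
  simp only [ψ, zero_smul, add_zero, one_smul, add_sub_cancel] at this
  linarith

theorem ConvexOn.add_inner_gradient_le (hf : ConvexOn ℝ univ f) (u v : E) :
    f u + ⟪f' u, v - u⟫ ≤ f v := by
  have hline : ConvexOn ℝ univ (fun t : ℝ => f (u + t • (v - u))) := by
    have := hf.comp_affineMap (AffineMap.lineMap u v : ℝ →ᵃ[ℝ] E)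
    simp only [preimage_univ] at this
    refine this.congr fun t _ => ?_
    simp [AffineMap.lineMap_apply, add_comm]
  have hslope := hline.le_slope_of_hasDerivAt (mem_univ 0) (mem_univ 1) one_pos
    (by simpa using (hf' (u + (0 : ℝ) • (v - u))).hasDerivAt_comp_line)
  simp only [slope_def_field, one_smul, add_sub_cancel, zero_smul, add_zero, sub_zero, div_one]
    at hslope
  linarith

variable {L : ℝ} (hL : 0 < L) (hlip : ∀ x y, ‖f' x - f' y‖ ≤ L * ‖x - y‖)
include hL hlip

theorem ConvexOn.add_inner_add_sq_gradient_le (hf : ConvexOn ℝ univ f) (u v : E) :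
    f u + ⟪f' u, v - u⟫ + ‖f' v - f' u‖ ^ 2 / (2 * L) ≤ f v := by
  set q := f' v - f' u
  -- `f (v - q / L)` lies between the tangent plane at `u` and the descent bound at `v`
  have hdesc := le_add_inner_add_sq_of_lipschitz_gradient hf' hlip v (v - L⁻¹ • q)
  have hgrad := hf.add_inner_gradient_le hf' u (v - L⁻¹ • q)
  have hq : ⟪f' v, q⟫ - ⟪f' u, q⟫ = ‖q‖ ^ 2 := by
    rw [← inner_sub_left, real_inner_self_eq_norm_sq]
  rw [sub_sub_cancel_left, norm_neg, norm_smul, Real.norm_of_nonneg (inv_nonneg.2 hL.le),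
    inner_neg_right, real_inner_smul_right] at hdesc
  rw [sub_right_comm, inner_sub_right, real_inner_smul_right] at hgrad
  have hsq : L / 2 * (L⁻¹ * ‖q‖) ^ 2 = L⁻¹ * ‖q‖ ^ 2 - ‖q‖ ^ 2 / (2 * L) := by
    field_simp; ring
  linear_combination hdesc + hgrad - L⁻¹ * hq + hsq

theorem ConvexOn.norm_sq_gradient_sub_le (hf : ConvexOn ℝ univ f) (u v : E) :
    ‖f' v - f' u‖ ^ 2 ≤ L * ⟪f' v - f' u, v - u⟫ := by
  have huv := hf.add_inner_add_sq_gradient_le hf' hL hlip u v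
  have hvu := hf.add_inner_add_sq_gradient_le hf' hL hlip v u
  rw [norm_sub_rev, ← neg_sub v u, inner_neg_right] at hvu
  have : ‖f' v - f' u‖ ^ 2 / (2 * L) ≤ ⟪f' v - f' u, v - u⟫ / 2 := by
    rw [inner_sub_left]
    linarith
  rw [div_le_iff₀ (by positivity)] at this
  linarith

theorem ConvexOn.norm_sub_smul_gradient_sub_le (hf : ConvexOn ℝ univ f) {γ : ℝ} (hγ : 0 ≤ γ)
    (hγL : γ * L ≤ 2) (u v : E) :
    ‖(v - γ • f' v) - (u - γ • f' u)‖ ≤ ‖v - u‖ := by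
  have hco := hf.norm_sq_gradient_sub_le hf' hL hlip u v
  have hinner : 0 ≤ ⟪f' v - f' u, v - u⟫ := by
    nlinarith [sq_nonneg ‖f' v - f' u‖]
  rw [show (v - γ • f' v) - (u - γ • f' u) = (v - u) - γ • (f' v - f' u) by module]
  refine (pow_le_pow_iff_left₀ (norm_nonneg _) (norm_nonneg _) two_ne_zero).1 ?_
  rw [norm_sub_sq_real, real_inner_smul_right, norm_smul, Real.norm_of_nonneg hγ, mul_pow,
    real_inner_comm]
  nlinarith [mul_le_mul_of_nonneg_left hco (sq_nonneg γ), mul_nonneg hγ hinner]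

end FirstOrder

section PIGDStep

variable {E : Type*} [NormedAddCommGroup E] [InnerProductSpace ℝ E] [CompleteSpace E]
  {f g : E → ℝ} {f' : E → E} {L γ β : ℝ} {a d b : E}

theorem pigd_sufficient_decrease (hf' : ∀ x, HasGradientAt f (f' x) x)
    (hlip : ∀ x y, ‖f' x - f' y‖ ≤ L * ‖x - y‖) (hg : ConvexOn ℝ univ g) (hγ : 0 < γ)
    (hβ : 0 ≤ β)
    (hb : IsMinOn (fun z => ‖z - (a - γ • f' a + β • (a - d))‖ ^ 2 / (2 * γ) + g z) univ b) :
    f b + g b + (γ⁻¹ - L / 2 - β * γ⁻¹ / 2) * ‖b - a‖ ^ 2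
      ≤ f a + g a + β * γ⁻¹ / 2 * ‖a - d‖ ^ 2 := by
  have hprox := hg.add_inv_mul_inner_le_of_isMinOn hγ hb a
  have hdesc := le_add_inner_add_sq_of_lipschitz_gradient hf' hlip a b
  have hy : ⟪a - γ • f' a + β • (a - d) - b, a - b⟫
      = ‖b - a‖ ^ 2 + γ * ⟪f' a, b - a⟫ - β * ⟪a - d, b - a⟫ := by
    rw [show a - γ • f' a + β • (a - d) - b = -((b - a) + γ • f' a - β • (a - d)) by module,
      ← neg_sub b a, inner_neg_neg, inner_sub_left, inner_add_left, real_inner_smul_left,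
      real_inner_smul_left, real_inner_self_eq_norm_sq]
  rw [hy, mul_sub, mul_add, ← mul_assoc, inv_mul_cancel₀ hγ.ne', one_mul] at hprox
  have hcs : ⟪a - d, b - a⟫ ≤ (‖b - a‖ ^ 2 + ‖a - d‖ ^ 2) / 2 := by
    nlinarith [real_inner_le_norm (a - d) (b - a), sq_nonneg (‖b - a‖ - ‖a - d‖)]
  nlinarith [mul_le_mul_of_nonneg_left hcs (mul_nonneg hβ (inv_nonneg.2 hγ.le))]

theorem pigd_objective_sub_le (hf' : ∀ x, HasGradientAt f (f' x) x) (hL : 0 < L)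
    (hlip : ∀ x y, ‖f' x - f' y‖ ≤ L * ‖x - y‖) (hf : ConvexOn ℝ univ f) (hg : ConvexOn ℝ univ g)
    (hγ : 0 < γ) (hγL : γ * L ≤ 2) (hβ : 0 ≤ β)
    (hb : IsMinOn (fun z => ‖z - (a - γ • f' a + β • (a - d))‖ ^ 2 / (2 * γ) + g z) univ b)
    (z : E) :
    f b + g b - (f z + g z) ≤ γ⁻¹ * (‖b - a‖ + β * ‖a - d‖) * ‖b - z‖ := by
  set w := f' b + γ⁻¹ • (a - γ • f' a + β • (a - d) - b)
  have hprox := hg.add_inv_mul_inner_le_of_isMinOn hγ hb z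
  have hgrad := hf.add_inner_gradient_le hf' b z
  -- the prox residual splits into a gradient-step difference and the momentum term
  have hw : w = -γ⁻¹ • ((b - γ • f' b) - (a - γ • f' a)) + (γ⁻¹ * β) • (a - d) := by
    simp only [w]
    match_scalars <;> field_simp
  have hwnorm : ‖w‖ ≤ γ⁻¹ * (‖b - a‖ + β * ‖a - d‖) := by
    rw [hw]
    refine (norm_add_le _ _).trans ?_
    rw [norm_smul, norm_smul, norm_neg, Real.norm_of_nonneg (inv_nonneg.2 hγ.le),
      Real.norm_of_nonneg (mul_nonneg (inv_nonneg.2 hγ.le) hβ), mul_add, mul_assoc]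
    gcongr
    exact hf.norm_sub_smul_gradient_sub_le hf' hL hlip hγ.le hγL a b
  calc f b + g b - (f z + g z) ≤ ⟪w, b - z⟫ := by
        rw [← neg_sub z b, inner_neg_right, inner_add_left, real_inner_smul_left]
        linarith
    _ ≤ ‖w‖ * ‖b - z‖ := real_inner_le_norm _ _
    _ ≤ γ⁻¹ * (‖b - a‖ + β * ‖a - d‖) * ‖b - z‖ := by gcongr

end PIGDStep

section Parameters

variable {L c : ℝ} {β γ δ : ℕ → ℝ}

theorem pigd_stepsize_pos (hL : 0 < L) (hc0 : 0 < c) (hβ1 : ∀ k, β k < 1)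
    (hγ : ∀ k, γ k = 2 * (1 - β k) * c / L) (k : ℕ) : 0 < γ k := by
  have : 0 < 1 - β k := by linarith [hβ1 k]
  rw [hγ]
  positivity

theorem pigd_stepsize_mul_lt_two (hL : 0 < L) (hc0 : 0 < c) (hc1 : c < 1) (hβ0 : ∀ k, 0 ≤ β k)
    (hγ : ∀ k, γ k = 2 * (1 - β k) * c / L) (k : ℕ) : γ k * L < 2 := by
  rw [hγ, div_mul_cancel₀ _ hL.ne']
  nlinarith [hβ0 k]

theorem pigd_delta_pos (hL : 0 < L) (hc0 : 0 < c) (hc1 : c < 1) (hβ0 : ∀ k, 0 ≤ β k)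
    (hβ1 : ∀ k, β k < 1) (hγ : ∀ k, γ k = 2 * (1 - β k) * c / L)
    (hδ : ∀ k, δ k = (1 / γ k - L / 2) / 2) (k : ℕ) : 0 < δ k := by
  have := (lt_inv_mul_iff₀ (pigd_stepsize_pos hL hc0 hβ1 hγ k)).2
    (pigd_stepsize_mul_lt_two hL hc0 hc1 hβ0 hγ k)
  rw [hδ, one_div]
  linarith

theorem pigd_delta_succ_le (hL : 0 < L) (hc0 : 0 < c) (hβ1 : ∀ k, β k < 1)
    (hβmono : ∀ k, β (k + 1) ≤ β k) (hγ : ∀ k, γ k = 2 * (1 - β k) * c / L)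
    (hδ : ∀ k, δ k = (1 / γ k - L / 2) / 2) (k : ℕ) : δ (k + 1) ≤ δ k := by
  have := pigd_stepsize_pos hL hc0 hβ1 hγ k
  rw [hδ, hδ, hγ, hγ] at *
  gcongr
  exact hβmono k

theorem pigd_delta_sub (hL : 0 < L) (hc0 : 0 < c) (hβ1 : ∀ k, β k < 1)
    (hγ : ∀ k, γ k = 2 * (1 - β k) * c / L) (hδ : ∀ k, δ k = (1 / γ k - L / 2) / 2) (k : ℕ) :
    δ k - β k * (γ k)⁻¹ / 2 = L * (1 - c) / (4 * c) := by
  have : 1 - β k ≠ 0 := by linarith [hβ1 k]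
  rw [hδ, hγ]
  field_simp
  ring

end Parameters

theorem sq_le_of_lyapunov_bounds {ξ₀ ξ₁ A B P r β δ m : ℝ} (hm : 0 < m) (hβ0 : 0 ≤ β)
    (hβ1 : β ≤ 1) (hξ₁ : 0 ≤ ξ₁) (hdec : m * (A ^ 2 + B ^ 2) ≤ ξ₀ - ξ₁)
    (hgap : ξ₁ ≤ r * (A + β * B) * P + δ * A ^ 2) :
    ξ₁ ^ 2 ≤ (δ ^ 2 + r ^ 2) / m * (ξ₀ - ξ₁) * (2 * P ^ 2 + A ^ 2) := by
  have hAB : (A + β * B) ^ 2 ≤ 2 * (A ^ 2 + B ^ 2) := by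
    nlinarith [sq_nonneg (A - β * B),
      mul_le_mul_of_nonneg_left (mul_le_one₀ hβ1 hβ0 hβ1) (sq_nonneg B)]
  calc ξ₁ ^ 2 ≤ (r * (A + β * B) * P + δ * A ^ 2) ^ 2 := pow_le_pow_left₀ hξ₁ hgap 2
    _ ≤ ((r * (A + β * B)) ^ 2 / 2 + δ ^ 2 * A ^ 2) * (2 * P ^ 2 + A ^ 2) := by
      nlinarith [sq_nonneg (r * (A + β * B) * A - 2 * δ * A * P)]
    _ ≤ (δ ^ 2 + r ^ 2) / m * (m * (A ^ 2 + B ^ 2)) * (2 * P ^ 2 + A ^ 2) := by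
      rw [div_mul_comm, mul_div_cancel_left₀ _ hm.ne']
      gcongr
      nlinarith [mul_le_mul_of_nonneg_left hAB (sq_nonneg r),
        mul_nonneg (sq_nonneg δ) (sq_nonneg B)]
    _ ≤ (δ ^ 2 + r ^ 2) / m * (ξ₀ - ξ₁) * (2 * P ^ 2 + A ^ 2) := by gcongr

theorem pigd_stmt2_general
    {n : ℕ} (f g F : EuclideanSpace ℝ (Fin n) → ℝ)
    (f' : EuclideanSpace ℝ (Fin n) → EuclideanSpace ℝ (Fin n))
    (L c : ℝ) (hL : 0 < L) (hc0 : 0 < c) (hc1 : c < 1)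
    (hfconv : ConvexOn ℝ Set.univ f)
    (hgconv : ConvexOn ℝ Set.univ g)
    (hf' : ∀ x, HasGradientAt f (f' x) x)
    (hlip : ∀ x y, ‖f' x - f' y‖ ≤ L * ‖x - y‖)
    (hF : ∀ x, F x = f x + g x)
    (β γ : ℕ → ℝ)
    (hβnonneg : ∀ k, 0 ≤ β k) (hβlt : ∀ k, β k < 1)
    (hβmono : ∀ k, β (k + 1) ≤ β k)
    (hγ : ∀ k, γ k = 2 * (1 - β k) * c / L)
    (prox : ℝ → EuclideanSpace ℝ (Fin n) → EuclideanSpace ℝ (Fin n))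
    (hprox : ∀ (γ' : ℝ) (y : EuclideanSpace ℝ (Fin n)), 0 < γ' →
      IsMinOn (fun z => ‖z - y‖ ^ 2 / (2 * γ') + g z) Set.univ (prox γ' y))
    (x : ℤ → EuclideanSpace ℝ (Fin n))
    (hiter : ∀ k : ℕ,
      x (k + 1) = prox (γ k) (x k - γ k • f' (x k) + β k • (x k - x ((k : ℤ) - 1))))
    -- `argmin F` is nonempty; `F xstar = min F`
    (xstar : EuclideanSpace ℝ (Fin n)) (hxstar : ∀ y, F xstar ≤ F y)
    -- `xbar k` is the metric projection of `x k` onto `argmin F`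
    (xbar : ℕ → EuclideanSpace ℝ (Fin n))
    (hxbar_mem : ∀ k, ∀ y, F (xbar k) ≤ F y)
    (δ ξ ε : ℕ → ℝ)
    (hδ : ∀ k, δ k = (1 / γ k - L / 2) / 2)
    (hξ : ∀ k, ξ k = F (x k) + δ k * ‖x k - x ((k : ℤ) - 1)‖ ^ 2 - F xstar)
    (hε : ∀ k, ε k = 4 * c * (δ (k + 1)) ^ 2 / ((1 - c) * L) + 4 * c / ((1 - c) * L * (γ k) ^ 2)) :
    ∀ k : ℕ,
      (ξ (k + 1)) ^ 2
        ≤ ε k * (ξ k - ξ (k + 1))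
          * (2 * ‖x (k + 1) - xbar (k + 1)‖ ^ 2 + ‖x (k + 1) - x k‖ ^ 2) := by
  intro k
  have hγpos := pigd_stepsize_pos hL hc0 hβlt hγ k
  have hδanti := pigd_delta_succ_le hL hc0 hβlt hβmono hγ hδ k
  have hm := pigd_delta_sub hL hc0 hβlt hγ hδ k
  have hεk : ε k = (δ (k + 1) ^ 2 + (γ k)⁻¹ ^ 2) / (L * (1 - c) / (4 * c)) := by
    have : 1 - c ≠ 0 := by linarith
    rw [hε]
    field_simp
  have hb := hiter k ▸ hprox _ _ hγpos
  have hdec := pigd_sufficient_decrease hf' hlip hgconv hγpos (hβnonneg k) hb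
  have hgap := pigd_objective_sub_le hf' hL hlip hfconv hgconv hγpos
    (pigd_stepsize_mul_lt_two hL hc0 hc1 hβnonneg hγ k).le (hβnonneg k) hb (xbar (k + 1))
  have hFmin : F (xbar (k + 1)) = F xstar := le_antisymm (hxbar_mem _ _) (hxstar _)
  have hξk1 := hξ (k + 1)
  push_cast at hξk1
  rw [add_sub_cancel_right] at hξk1
  rw [hεk]
  refine sq_le_of_lyapunov_bounds (B := ‖x k - x ((k : ℤ) - 1)‖) (by positivity) (hβnonneg k)
    (hβlt k).le ?_ ?_ ?_
  · nlinarith [hxstar (x (k + 1)), pigd_delta_pos hL hc0 hc1 hβnonneg hβlt hγ hδ (k + 1)]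
  · have h2δ : (γ k)⁻¹ - L / 2 = 2 * δ k := by rw [hδ k]; ring
    rw [h2δ] at hdec
    rw [hξ k, hξk1, ← hm]
    simp only [hF]
    nlinarith [mul_le_mul_of_nonneg_right hδanti (sq_nonneg ‖x (k + 1) - x k‖)]
  · rw [hξk1, ← hFmin, hF, hF]
    linarith

/-- Lemma 5, key inequality for the Lyapunov function of PIGD. Under the
PIGD setup, with `argmin F` nonempty, `x̄ᵏ` the projection of `xᵏ` onto `argmin F`,
`δₖ = (1/γₖ − L/2)/2`, `ξₖ = F(xᵏ) + δₖ‖xᵏ − xᵏ⁻¹‖² − min F`, and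
`εₖ = 4cδₖ₊₁²/((1−c)L) + 4c/((1−c)Lγₖ²)`, we have
`ξₖ₊₁² ≤ εₖ (ξₖ − ξₖ₊₁)(2‖xᵏ⁺¹ − x̄ᵏ⁺¹‖² + ‖xᵏ⁺¹ − xᵏ‖²)` for every `k ≥ 0`. -/
theorem pigd_stmt2
    {n : ℕ} (f g F : EuclideanSpace ℝ (Fin n) → ℝ)
    (f' : EuclideanSpace ℝ (Fin n) → EuclideanSpace ℝ (Fin n))
    (L c : ℝ) (hL : 0 < L) (hc0 : 0 < c) (hc1 : c < 1)
    (hfconv : ConvexOn ℝ Set.univ f)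
    (hgconv : ConvexOn ℝ Set.univ g)
    (hgcont : Continuous g)
    (hf' : ∀ x, HasGradientAt f (f' x) x)
    (hlip : ∀ x y, ‖f' x - f' y‖ ≤ L * ‖x - y‖)
    (hF : ∀ x, F x = f x + g x)
    (hFbdd : BddBelow (Set.range F))
    (β γ : ℕ → ℝ)
    (hβnonneg : ∀ k, 0 ≤ β k) (hβlt : ∀ k, β k < 1)
    (hβmono : ∀ k, β (k + 1) ≤ β k)
    (hγ : ∀ k, γ k = 2 * (1 - β k) * c / L)
    (prox : ℝ → EuclideanSpace ℝ (Fin n) → EuclideanSpace ℝ (Fin n))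
    (hprox : ∀ (γ' : ℝ) (y : EuclideanSpace ℝ (Fin n)), 0 < γ' →
      IsMinOn (fun z => ‖z - y‖ ^ 2 / (2 * γ') + g z) Set.univ (prox γ' y))
    (x : ℤ → EuclideanSpace ℝ (Fin n))
    (hiter : ∀ k : ℕ,
      x (k + 1) = prox (γ k) (x k - γ k • f' (x k) + β k • (x k - x ((k : ℤ) - 1))))
    -- `argmin F` is nonempty; `F xstar = min F`
    (xstar : EuclideanSpace ℝ (Fin n)) (hxstar : ∀ y, F xstar ≤ F y)
    -- `xbar k` is the metric projection of `x k` onto `argmin F`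
    (xbar : ℕ → EuclideanSpace ℝ (Fin n))
    (hxbar_mem : ∀ k, ∀ y, F (xbar k) ≤ F y)
    (hxbar_proj : ∀ k : ℕ, ∀ y, (∀ z, F y ≤ F z) → ‖x k - xbar k‖ ≤ ‖x k - y‖)
    (δ ξ ε : ℕ → ℝ)
    (hδ : ∀ k, δ k = (1 / γ k - L / 2) / 2)
    (hξ : ∀ k, ξ k = F (x k) + δ k * ‖x k - x ((k : ℤ) - 1)‖ ^ 2 - F xstar)
    (hε : ∀ k, ε k = 4 * c * (δ (k + 1)) ^ 2 / ((1 - c) * L) + 4 * c / ((1 - c) * L * (γ k) ^ 2)) :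
    ∀ k : ℕ,
      (ξ (k + 1)) ^ 2
        ≤ ε k * (ξ k - ξ (k + 1))
          * (2 * ‖x (k + 1) - xbar (k + 1)‖ ^ 2 + ‖x (k + 1) - x k‖ ^ 2) :=
  pigd_stmt2_general f g F f' L c hL hc0 hc1 hfconv hgconv hf' hlip hF β γ hβnonneg hβlt hβmono hγ
    prox hprox x hiter xstar hxstar xbar hxbar_mem δ ξ ε hδ hξ hε
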